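/- Let σ_0, σ_1, σ > 0, h ≥ 0, and δ ∈ (0, 1/3). For a = 0,1 define Δ_a(n) = σ_a² / ((σ_a²/σ² + n)(σ_a²/σ² + 1 + n)) for n ∈ ℕ. Let (n_{0,t})_{t≥1} be any sequence of natural numbers with t^{2/3+δ} ≤ n_{0,t} ≤ t − t^{2/3+δ} for all sufficiently large t, set n_{1,t} = t − n_{0,t} and p_t = n_{0,t}/t. Then, as t → ∞, the difference Δ_0(n_{0,t})^h / (Δ_0(n_{0,t})^h + Δ_1(n_{1,t})^h) − p_t^{−2h}σ_0^{2h} / (p_t^{−2h}σ_0^{2h} + (1−p_t)^{−2h}σ_1^{2h}) converges to 0. -/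

import Mathlib

/-!
Both quantities are shares of the form `x ^ h / (x ^ h + y ^ h)`, which depend only on `y / x`,
and `|1 / (1 + a) - 1 / (1 + b)| ≤ |a / b - 1|`, so it suffices that the two ratios are
asymptotically equal. The comparison term is the share of `σₐ² / nₐ²` (the factor `t²` cancels),
and `n² Δₐ(n) → σₐ²`; both counts tend to infinity because of the interior condition.
-/

open Filter

/-- The expected one-step information gain of an arm with sampling variance `σa²`
after `n` observations, under a `N(0, σ²)` prior:
`Δ(n) = σa² / ((σa²/σ² + n) (σa²/σ² + 1 + n))`. -/
noncomputable def budGain (σ σa : ℝ) (n : ℕ) : ℝ :=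
  σa ^ 2 / ((σa ^ 2 / σ ^ 2 + n) * (σa ^ 2 / σ ^ 2 + 1 + n))

open Topology

lemma abs_inv_one_add_sub_inv_one_add_le {x y : ℝ} (hx : 0 < x) (hy : 0 < y) :
    |(1 + x)⁻¹ - (1 + y)⁻¹| ≤ |x / y - 1| := by
  have hxy : (1 + x)⁻¹ - (1 + y)⁻¹ = (1 - x / y) * (y / ((1 + x) * (1 + y))) := by
    field_simp
    ring
  rw [hxy, abs_mul, abs_sub_comm]
  refine mul_le_of_le_one_right (abs_nonneg _) ?_
  rw [abs_of_pos (by positivity), div_le_one (by positivity)]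
  nlinarith

lemma abs_rpow_div_rpow_add_rpow_sub_le {x y x' y' : ℝ} (hx : 0 < x) (hy : 0 < y)
    (hx' : 0 < x') (hy' : 0 < y') (h : ℝ) :
    |x ^ h / (x ^ h + y ^ h) - x' ^ h / (x' ^ h + y' ^ h)| ≤ |((y / x) / (y' / x')) ^ h - 1| := by
  have share_eq : ∀ {a b : ℝ}, 0 < a → 0 < b → a ^ h / (a ^ h + b ^ h) = (1 + (b / a) ^ h)⁻¹ := by
    intro a b ha hb
    have := Real.rpow_pos_of_pos ha h
    rw [Real.div_rpow hb.le ha.le]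
    field_simp
  rw [share_eq hx hy, share_eq hx' hy', Real.div_rpow (div_pos hy hx).le (div_pos hy' hx').le]
  exact abs_inv_one_add_sub_inv_one_add_le (by positivity) (by positivity)

lemma rpow_neg_two_mul_mul_rpow_two_mul {p s : ℝ} (hp : 0 ≤ p) (hs : 0 ≤ s) (h : ℝ) :
    p ^ (-(2 * h)) * s ^ (2 * h) = (s ^ 2 / p ^ 2) ^ h := by
  rw [neg_mul_eq_mul_neg, Real.rpow_mul hp, Real.rpow_mul hs, Real.rpow_neg (by positivity),
    Real.rpow_two, Real.rpow_two, Real.div_rpow (by positivity) (by positivity), inv_mul_eq_div]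

lemma budGain_pos (σ : ℝ) {σa : ℝ} (hσa : σa ≠ 0) {n : ℕ} (hn : 0 < n) :
    0 < budGain σ σa n := by
  have : (0 : ℝ) < n := Nat.cast_pos.mpr hn
  unfold budGain
  positivity

lemma tendsto_budGain_mul_sq (σ σa : ℝ) :
    Tendsto (fun n : ℕ => budGain σ σa n * n ^ 2) atTop (𝓝 (σa ^ 2)) := by
  set c := σa ^ 2 / σ ^ 2
  have key := ((tendsto_natCast_div_add_atTop c).mul
    (tendsto_natCast_div_add_atTop (c + 1))).const_mul (σa ^ 2)
  rw [mul_one, mul_one] at key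
  refine key.congr fun n => ?_
  simp only [budGain, div_eq_mul_inv, mul_inv]
  ring

lemma tendsto_atTop_of_rpow_le_of_le_sub_rpow {α : ℝ} (hα : 0 < α) {n : ℕ → ℕ}
    (hn : ∀ᶠ t : ℕ in atTop, (t : ℝ) ^ α ≤ n t ∧ (n t : ℝ) ≤ t - (t : ℝ) ^ α) :
    Tendsto n atTop atTop ∧ Tendsto (fun t => t - n t) atTop atTop := by
  have hpow : Tendsto (fun t : ℕ => (t : ℝ) ^ α) atTop atTop :=
    (tendsto_rpow_atTop hα).comp tendsto_natCast_atTop_atTop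
  simp only [← tendsto_natCast_atTop_iff (R := ℝ)]
  refine ⟨tendsto_atTop_mono' _ (hn.mono fun t ht => ht.1) hpow,
    tendsto_atTop_mono' _ (hn.mono fun t ht => ?_) hpow⟩
  have hle : n t ≤ t := by
    have := Real.rpow_nonneg (Nat.cast_nonneg t) α
    exact_mod_cast ht.2.trans (sub_le_self _ this)
  show (t : ℝ) ^ α ≤ ((t - n t : ℕ) : ℝ)
  rw [Nat.cast_sub hle]
  linarith [ht.2]

lemma tendsto_budGain_div_budGain_div {ι : Type*} {l : Filter ι} (σ : ℝ) {σ₀ σ₁ : ℝ}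
    (hσ₀ : σ₀ ≠ 0) (hσ₁ : σ₁ ≠ 0) {m n : ι → ℕ} (hm : Tendsto m l atTop)
    (hn : Tendsto n l atTop) :
    Tendsto (fun i => (budGain σ σ₁ (n i) / budGain σ σ₀ (m i)) /
      ((σ₁ ^ 2 / (n i : ℝ) ^ 2) / (σ₀ ^ 2 / (m i : ℝ) ^ 2))) l (𝓝 1) := by
  have key := ((tendsto_budGain_mul_sq σ σ₁).comp hn).div ((tendsto_budGain_mul_sq σ σ₀).comp hm)
    (pow_ne_zero 2 hσ₀) |>.mul_const (σ₀ ^ 2 / σ₁ ^ 2)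
  rw [div_mul_div_comm, mul_comm (σ₁ ^ 2), div_self (by positivity)] at key
  refine key.congr' ?_
  filter_upwards [hm.eventually_gt_atTop 0, hn.eventually_gt_atTop 0] with i hmi hni
  have := budGain_pos σ hσ₀ hmi
  have : (0 : ℝ) < m i := Nat.cast_pos.mpr hmi
  have : (0 : ℝ) < n i := Nat.cast_pos.mpr hni
  simp only [Pi.div_apply, Function.comp_apply]
  field_simp

theorem stmt_8_general (σ σ₀ σ₁ h δ : ℝ)
    (hσ₀ : 0 < σ₀) (hσ₁ : 0 < σ₁)
    (hδ : δ ∈ Set.Ioo (0 : ℝ) (1 / 3))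
    (n₀ : ℕ → ℕ)
    (hn₀ : ∀ᶠ t : ℕ in atTop, (t : ℝ) ^ ((2 : ℝ) / 3 + δ) ≤ (n₀ t : ℝ) ∧
      (n₀ t : ℝ) ≤ (t : ℝ) - (t : ℝ) ^ ((2 : ℝ) / 3 + δ)) :
    Tendsto (fun t =>
        budGain σ σ₀ (n₀ t) ^ h /
          (budGain σ σ₀ (n₀ t) ^ h + budGain σ σ₁ (t - n₀ t) ^ h) -
        ((n₀ t : ℝ) / t) ^ (-(2 * h)) * σ₀ ^ (2 * h) /
          (((n₀ t : ℝ) / t) ^ (-(2 * h)) * σ₀ ^ (2 * h) +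
            (1 - (n₀ t : ℝ) / t) ^ (-(2 * h)) * σ₁ ^ (2 * h)))
      atTop (nhds 0) := by
  obtain ⟨hn₀_top, hn₁_top⟩ :=
    tendsto_atTop_of_rpow_le_of_le_sub_rpow (by linarith [hδ.1]) hn₀
  have hratio := tendsto_budGain_div_budGain_div σ hσ₀.ne' hσ₁.ne' hn₀_top hn₁_top
  have hbound := ((hratio.rpow_const (p := h) (Or.inl one_ne_zero)).sub_const 1).abs
  rw [Real.one_rpow, sub_self, abs_zero] at hbound
  refine squeeze_zero_norm' ?_ hbound
  filter_upwards [hn₀_top.eventually_gt_atTop 0, hn₁_top.eventually_gt_atTop 0] with t hm hn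
  have ht : (0 : ℝ) < t := by exact_mod_cast (show 0 < t by omega)
  have hq : 1 - (n₀ t : ℝ) / t = ((t - n₀ t : ℕ) : ℝ) / t := by
    rw [Nat.cast_sub (by omega)]
    field_simp
  rw [hq, rpow_neg_two_mul_mul_rpow_two_mul (by positivity) hσ₀.le,
    rpow_neg_two_mul_mul_rpow_two_mul (by positivity) hσ₁.le, Real.norm_eq_abs]
  have hscale : (σ₁ ^ 2 / (((t - n₀ t : ℕ) : ℝ) / t) ^ 2) / (σ₀ ^ 2 / ((n₀ t : ℝ) / t) ^ 2) =
      (σ₁ ^ 2 / ((t - n₀ t : ℕ) : ℝ) ^ 2) / (σ₀ ^ 2 / (n₀ t : ℝ) ^ 2) := by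
    field_simp
  refine (abs_rpow_div_rpow_add_rpow_sub_le (budGain_pos σ hσ₀.ne' hm)
    (budGain_pos σ hσ₁.ne' hn) (by positivity) (by positivity) h).trans_eq ?_
  rw [hscale]

/-- **Example 1, interior-region approximation.** If the arm-0 counts satisfy
`t^{2/3+δ} ≤ n₀ t ≤ t - t^{2/3+δ}` for all sufficiently large `t`, with
`δ ∈ (0,1/3)`, `n₁ t = t - n₀ t` and `p t = n₀ t / t`, then
`Δ₀(n₀ t)^h/(Δ₀(n₀ t)^h + Δ₁(n₁ t)^h)
  − p_t^{-2h}σ₀^{2h}/(p_t^{-2h}σ₀^{2h} + (1-p_t)^{-2h}σ₁^{2h}) → 0`. -/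
theorem stmt_8 (σ σ₀ σ₁ h δ : ℝ)
    (hσ : 0 < σ) (hσ₀ : 0 < σ₀) (hσ₁ : 0 < σ₁) (hh : 0 ≤ h)
    (hδ : δ ∈ Set.Ioo (0 : ℝ) (1 / 3))
    (n₀ : ℕ → ℕ)
    (hn₀ : ∀ᶠ t : ℕ in atTop, (t : ℝ) ^ ((2 : ℝ) / 3 + δ) ≤ (n₀ t : ℝ) ∧
      (n₀ t : ℝ) ≤ (t : ℝ) - (t : ℝ) ^ ((2 : ℝ) / 3 + δ)) :
    Tendsto (fun t =>
        budGain σ σ₀ (n₀ t) ^ h /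
          (budGain σ σ₀ (n₀ t) ^ h + budGain σ σ₁ (t - n₀ t) ^ h) -
        ((n₀ t : ℝ) / t) ^ (-(2 * h)) * σ₀ ^ (2 * h) /
          (((n₀ t : ℝ) / t) ^ (-(2 * h)) * σ₀ ^ (2 * h) +
            (1 - (n₀ t : ℝ) / t) ^ (-(2 * h)) * σ₁ ^ (2 * h)))
      atTop (nhds 0) :=
  stmt_8_general σ σ₀ σ₁ h δ hσ₀ hσ₁ hδ n₀ hn₀
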